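/- arXiv:2504.17147 — 3 statements merged into one kernel-verified Lean document; each statement's English description precedes it below -/
import Mathlib

section
/- Let Θ be a measurable space with σ-finite measure μ, and let π, π̂, q(·|·) be strictly positive measurable functions with q symmetric (q(θ*|θ) = q(θ|θ*)). Define α₁(θ→θ*) = min{1, π̂(θ*)/π̂(θ)} and α₂(θ→θ*) = min{1, π(θ*)π̂(θ)/(π(θ)π̂(θ*))}. Then for all θ, θ*: π(θ) q(θ*|θ) α₁(θ→θ*) α₂(θ→θ*) = π(θ*) q(θ|θ*) α₁(θ*→θ) α₂(θ*→θ). -/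
/-! Each side of the balance equation equals
`q · min (π̂ θ) (π̂ θ*) · min (π θ · π̂ θ*) (π θ* · π̂ θ) / (π̂ θ · π̂ θ*)`,
which is symmetric in `θ` and `θ*`. -/

open MeasureTheory

lemma mul_min_one_div_self {x : ℝ} (hx : 0 < x) (y : ℝ) : x * min 1 (y / x) = min x y := by
  rw [mul_min_of_nonneg _ _ hx.le, mul_one, mul_div_cancel₀ y hx.ne']

lemma min_one_div_eq_min_div {x : ℝ} (hx : 0 < x) (y : ℝ) : min 1 (y / x) = min x y / x := by
  rw [← mul_min_one_div_self hx y, mul_div_cancel_left₀ _ hx.ne']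

lemma mul_min_one_div_mul_min_one_div {a c d : ℝ} (ha : 0 < a) (hc : 0 < c) (hd : 0 < d)
    (b : ℝ) :
    a * min 1 (d / c) * min 1 (b * c / (a * d)) = min c d * min (a * d) (b * c) / (c * d) := by
  have hcd : a * min 1 (d / c) = a / c * min c d := by
    rw [← mul_min_one_div_self hc d]; field_simp
  rw [hcd, min_one_div_eq_min_div (by positivity)]
  field_simp

theorem stmt_2_general {Θ : Type*}
    (π πhat : Θ → ℝ) (q : Θ → Θ → ℝ)
    (hπ : ∀ θ, 0 < π θ) (hπhat : ∀ θ, 0 < πhat θ)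
    (hqsym : ∀ θ θ', q θ θ' = q θ' θ) :
    ∀ θ θs : Θ,
      π θ * q θ θs * min 1 (πhat θs / πhat θ)
          * min 1 (π θs * πhat θ / (π θ * πhat θs))
        = π θs * q θs θ * min 1 (πhat θ / πhat θs)
          * min 1 (π θ * πhat θs / (π θs * πhat θ)) := by
  intro θ θs
  have hforward := mul_min_one_div_mul_min_one_div (hπ θ) (hπhat θ) (hπhat θs) (π θs)
  have hbackward := mul_min_one_div_mul_min_one_div (hπ θs) (hπhat θs) (hπhat θ) (π θ)
  rw [min_comm (πhat θs), min_comm (π θs * _), mul_comm (πhat θs)] at hbackward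
  rw [hqsym θ θs]
  linear_combination q θs θ * (hforward - hbackward)

/-- Pointwise detailed balance for the delayed-acceptance MCMC of Christen and Fox (2005),
with a symmetric proposal `q` (`q θ θ'` is the density of proposing `θ'` from `θ`). -/
theorem stmt_2 {Θ : Type*} [MeasurableSpace Θ] (μ : Measure Θ) [SigmaFinite μ]
    (π πhat : Θ → ℝ) (q : Θ → Θ → ℝ)
    (hπm : Measurable π) (hπhatm : Measurable πhat)
    (hqm : Measurable (Function.uncurry q))
    (hπ : ∀ θ, 0 < π θ) (hπhat : ∀ θ, 0 < πhat θ)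
    (hq : ∀ θ θ', 0 < q θ θ') (hqsym : ∀ θ θ', q θ θ' = q θ' θ) :
    ∀ θ θs : Θ,
      π θ * q θ θs * min 1 (πhat θs / πhat θ)
          * min 1 (π θs * πhat θ / (π θ * πhat θs))
        = π θs * q θs θ * min 1 (πhat θ / πhat θs)
          * min 1 (π θ * πhat θs / (π θs * πhat θ)) :=
  stmt_2_general π πhat q hπ hπhat hqsym
end

section
/- Let h : Θ × X → ℝ be strictly positive with Z(θ) = ∫_X h(θ, y) dν(y) finite, let p : Θ → ℝ and q : Θ × Θ → ℝ be strictly positive, and define the exchange acceptance probability α(θ, θ*, y) = min{1, [p(θ*) h(θ*, x) h(θ, y) q(θ*, θ)] / [p(θ) h(θ, x) h(θ*, y) q(θ, θ*)]} for fixed data x. Then π(θ) q(θ, θ*) ∫_X α(θ, θ*, y) (h(θ*, y)/Z(θ*)) dν(y) = π(θ*) q(θ*, θ) ∫_X α(θ*, θ, y) (h(θ, y)/Z(θ)) dν(y), where π(θ) = p(θ) h(θ, x)/Z(θ). -/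
open MeasureTheory

/-!
Both sides are integrals over the auxiliary variable `y`, and the integrands already agree
pointwise: with `B = p θ h θ x h θ* y q θ θ*` and `A` its image under `θ ↔ θ*`, the left
integrand is `B · min 1 (A / B) / (Z θ Z θ*) = min B A / (Z θ Z θ*)`, which is symmetric.
-/

theorem mul_min_one_div_comm {𝕜 : Type*} [Field 𝕜] [LinearOrder 𝕜] [IsStrictOrderedRing 𝕜]
    {a b : 𝕜} (ha : 0 < a) (hb : 0 < b) : b * min 1 (a / b) = a * min 1 (b / a) := by
  rw [mul_min_of_nonneg _ _ hb.le, mul_min_of_nonneg _ _ ha.le, mul_one, mul_one, mul_div_cancel₀ _ hb.ne', mul_div_cancel₀ _ ha.ne',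
    min_comm]

theorem exchange_integrand_symm {Θ X : Type*} (h : Θ → X → ℝ) (p : Θ → ℝ) (q : Θ → Θ → ℝ)
    (Z : Θ → ℝ) (x y : X) (hh : ∀ θ y, 0 < h θ y) (hp : ∀ θ, 0 < p θ)
    (hq : ∀ θ θ', 0 < q θ θ') (θ θs : Θ) :
    (p θ * h θ x / Z θ) * q θ θs *
        (min 1 (p θs * h θs x * h θ y * q θs θ / (p θ * h θ x * h θs y * q θ θs))
          * (h θs y / Z θs))
      = (p θs * h θs x / Z θs) * q θs θ *
        (min 1 (p θ * h θ x * h θs y * q θ θs / (p θs * h θs x * h θ y * q θs θ))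
          * (h θ y / Z θ)) := by
  set A := p θs * h θs x * h θ y * q θs θ
  set B := p θ * h θ x * h θs y * q θ θs
  have hA : 0 < A := mul_pos (mul_pos (mul_pos (hp θs) (hh θs x)) (hh θ y)) (hq θs θ)
  have hB : 0 < B := mul_pos (mul_pos (mul_pos (hp θ) (hh θ x)) (hh θs y)) (hq θ θs)
  calc (p θ * h θ x / Z θ) * q θ θs * (min 1 (A / B) * (h θs y / Z θs))
      = B * min 1 (A / B) / (Z θ * Z θs) := by ring
    _ = A * min 1 (B / A) / (Z θ * Z θs) := by rw [mul_min_one_div_comm hA hB]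
    _ = (p θs * h θs x / Z θs) * q θs θ * (min 1 (B / A) * (h θ y / Z θ)) := by ring

theorem stmt_3_general {Θ X : Type*} [MeasurableSpace X] (ν : Measure X)
    (h : Θ → X → ℝ) (p : Θ → ℝ) (q : Θ → Θ → ℝ) (x : X)
    (hh : ∀ θ y, 0 < h θ y)
    (hp : ∀ θ, 0 < p θ) (hq : ∀ θ θ', 0 < q θ θ') :
    ∀ θ θs : Θ,
      (p θ * h θ x / (∫ y, h θ y ∂ν)) * q θ θs *
          ∫ y, min 1 (p θs * h θs x * h θ y * q θs θ / (p θ * h θ x * h θs y * q θ θs))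
            * (h θs y / (∫ y', h θs y' ∂ν)) ∂ν
        = (p θs * h θs x / (∫ y, h θs y ∂ν)) * q θs θ *
          ∫ y, min 1 (p θ * h θ x * h θs y * q θ θs / (p θs * h θs x * h θ y * q θs θ))
            * (h θ y / (∫ y', h θ y' ∂ν)) ∂ν := by
  intro θ θs
  rw [← integral_const_mul, ← integral_const_mul]
  exact integral_congr_ae <| ae_of_all _ fun y =>
    exchange_integrand_symm h p q (fun t => ∫ y, h t y ∂ν) x y hh hp hq θ θs

/-- Detailed balance of the exchange algorithm (Murray et al. 2006) with respect to the
doubly intractable posterior `π(θ) = p(θ) h(θ, x) / Z(θ)`, after averaging over the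
auxiliary variable `y ~ h(θ*, ·)/Z(θ*)`. Here `q θ θ'` denotes `q(θ' | θ)`. -/
theorem stmt_3 {Θ X : Type*} [MeasurableSpace X] (ν : Measure X)
    (h : Θ → X → ℝ) (p : Θ → ℝ) (q : Θ → Θ → ℝ) (x : X)
    (hh : ∀ θ y, 0 < h θ y) (hhm : ∀ θ, Measurable (h θ))
    (hint : ∀ θ, Integrable (h θ) ν)
    (hp : ∀ θ, 0 < p θ) (hq : ∀ θ θ', 0 < q θ θ') :
    ∀ θ θs : Θ,
      (p θ * h θ x / (∫ y, h θ y ∂ν)) * q θ θs *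
          ∫ y, min 1 (p θs * h θs x * h θ y * q θs θ / (p θ * h θ x * h θs y * q θ θs))
            * (h θs y / (∫ y', h θs y' ∂ν)) ∂ν
        = (p θs * h θs x / (∫ y, h θs y ∂ν)) * q θs θ *
          ∫ y, min 1 (p θ * h θ x * h θs y * q θ θs / (p θs * h θs x * h θ y * q θs θ))
            * (h θ y / (∫ y', h θ y' ∂ν)) ∂ν :=
  stmt_3_general ν h p q x hh hp hq
end

section
/- With the setup of the exchange algorithm (strictly positive p, h, q; finite Z(θ) = ∫ h(θ,y) dν(y)), define the DA-AVM averaged acceptance α_DA(θ→θ*) = α₁(θ→θ*) · ∫_X α₂(θ, θ*, y) (h(θ*, y)/Z(θ*)) dν(y), where α₁(θ→θ*) = min{1, π̂(θ*) q(θ*,θ)/(π̂(θ) q(θ,θ*))} and α₂(θ, θ*, y) = min{1, [p(θ*) h(θ*, x) h(θ, y) π̂(θ)] / [p(θ) h(θ, x) h(θ*, y) π̂(θ*)]} for a strictly positive surrogate π̂. Then π(θ) q(θ, θ*) α_DA(θ→θ*) = π(θ*) q(θ*, θ) α_DA(θ*→θ), where π(θ) = p(θ) h(θ, x)/Z(θ).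 -/
open MeasureTheory

/-! Both acceptance stages are Metropolis–Hastings ratios `min 1 (b / a)` with positive `a`, and
`min 1 (b / a) = min a b / a`. Multiplying the first stage by `π̂(θ) q(θ, θ*)` and the second by
the weight `p(θ) h(θ, x) π̂(θ*) h(θ*, y)` of the extended target turns the probability flow
`π(θ) q(θ, θ*) α_DA(θ → θ*)` into
`min (π̂ θ q θ θ*) (π̂ θ* q θ* θ) * ∫ min (p θ h θ x π̂ θ* h θ* y) (p θ* h θ* x π̂ θ h θ y) / (Z θ Z θ* π̂ θ π̂ θ*)`,
which is visibly symmetric in `θ` and `θ*`. -/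

theorem min_one_div_eq_min_div_s4 {a : ℝ} (ha : 0 < a) (b : ℝ) : min 1 (b / a) = min a b / a := by
  rw [← min_div_div_right ha.le, div_self ha.ne']

theorem integral_exchange_accept_eq {X : Type*} [MeasurableSpace X] (ν : Measure X)
    {f : X → ℝ} (hf : ∀ y, 0 < f y) (g : X → ℝ) {u v : ℝ} (hu : 0 < u) (hv : 0 < v)
    (u' v' Z : ℝ) :
    ∫ y, min 1 (u' * g y * v' / (u * f y * v)) * (f y / Z) ∂ν
      = (∫ y, min (u * v * f y) (u' * v' * g y) ∂ν) / (u * v * Z) := by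
  rw [← integral_div]
  refine integral_congr_ae (Filter.Eventually.of_forall fun y => ?_)
  have hw : 0 < u * v * f y := mul_pos (mul_pos hu hv) (hf y)
  dsimp only
  rw [show u' * g y * v' / (u * f y * v) = u' * v' * g y / (u * v * f y) by ring,
    min_one_div_eq_min_div_s4 hw]
  field_simp [(hf y).ne']

theorem delayedAcceptance_flow_eq {X : Type*} [MeasurableSpace X] (ν : Measure X)
    {f : X → ℝ} (hf : ∀ y, 0 < f y) (g : X → ℝ) {u a k v : ℝ} (hu : 0 < u) (ha : 0 < a)
    (hk : 0 < k) (hv : 0 < v) (u' k' Z Z' : ℝ) :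
    u / Z * k * (min 1 (v * k' / (a * k)) *
        ∫ y, min 1 (u' * g y * a / (u * f y * v)) * (f y / Z') ∂ν)
      = min (a * k) (v * k') * (∫ y, min (u * v * f y) (u' * a * g y) ∂ν) / (Z * Z' * a * v) := by
  rw [integral_exchange_accept_eq ν hf g hu hv, min_one_div_eq_min_div_s4 (mul_pos ha hk)]
  field_simp

theorem stmt_4_general {Θ X : Type*} [MeasurableSpace X] (ν : Measure X)
    (h : Θ → X → ℝ) (p : Θ → ℝ) (q : Θ → Θ → ℝ) (πhat : Θ → ℝ) (x : X)
    (hh : ∀ θ y, 0 < h θ y)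
    (hp : ∀ θ, 0 < p θ) (hq : ∀ θ θ', 0 < q θ θ') (hπhat : ∀ θ, 0 < πhat θ) :
    ∀ θ θs : Θ,
      (p θ * h θ x / (∫ y, h θ y ∂ν)) * q θ θs *
          (min 1 (πhat θs * q θs θ / (πhat θ * q θ θs)) *
            ∫ y, min 1 (p θs * h θs x * h θ y * πhat θ / (p θ * h θ x * h θs y * πhat θs))
              * (h θs y / (∫ y', h θs y' ∂ν)) ∂ν)
        = (p θs * h θs x / (∫ y, h θs y ∂ν)) * q θs θ *
          (min 1 (πhat θ * q θ θs / (πhat θs * q θs θ)) *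
            ∫ y, min 1 (p θ * h θ x * h θs y * πhat θs / (p θs * h θs x * h θ y * πhat θ))
              * (h θ y / (∫ y', h θ y' ∂ν)) ∂ν) := by
  intro θ θs
  have hpos : ∀ θ, 0 < p θ * h θ x := fun θ => mul_pos (hp θ) (hh θ x)
  rw [delayedAcceptance_flow_eq ν (hh θs) _ (hpos θ) (hπhat θ) (hq θ θs) (hπhat θs),
    delayedAcceptance_flow_eq ν (hh θ) _ (hpos θs) (hπhat θs) (hq θs θ) (hπhat θ)]
  simp only [min_comm (πhat θs * q θs θ), min_comm (p θs * h θs x * πhat θ * h θ _)]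
  ring

/-- Detailed balance of the delayed-acceptance auxiliary variable MCMC with respect to the
doubly intractable posterior `π(θ) = p(θ) h(θ, x) / Z(θ)`: the first-stage surrogate
screening `α₁` composed with the second-stage exchange correction `α₂`, averaged over the
auxiliary variable, is reversible with respect to `π`. Here `q θ θ'` denotes `q(θ' | θ)`
and `πhat` is the strictly positive surrogate. -/
theorem stmt_4 {Θ X : Type*} [MeasurableSpace X] (ν : Measure X)
    (h : Θ → X → ℝ) (p : Θ → ℝ) (q : Θ → Θ → ℝ) (πhat : Θ → ℝ) (x : X)
    (hh : ∀ θ y, 0 < h θ y) (hhm : ∀ θ, Measurable (h θ))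
    (hint : ∀ θ, Integrable (h θ) ν)
    (hp : ∀ θ, 0 < p θ) (hq : ∀ θ θ', 0 < q θ θ') (hπhat : ∀ θ, 0 < πhat θ) :
    ∀ θ θs : Θ,
      (p θ * h θ x / (∫ y, h θ y ∂ν)) * q θ θs *
          (min 1 (πhat θs * q θs θ / (πhat θ * q θ θs)) *
            ∫ y, min 1 (p θs * h θs x * h θ y * πhat θ / (p θ * h θ x * h θs y * πhat θs))
              * (h θs y / (∫ y', h θs y' ∂ν)) ∂ν)
        = (p θs * h θs x / (∫ y, h θs y ∂ν)) * q θs θ *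
          (min 1 (πhat θ * q θ θs / (πhat θs * q θs θ)) *
            ∫ y, min 1 (p θ * h θ x * h θs y * πhat θs / (p θs * h θs x * h θ y * πhat θ))
              * (h θ y / (∫ y', h θ y' ∂ν)) ∂ν) :=
  stmt_4_general ν h p q πhat x hh hp hq hπhat
end
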